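/- Let (H, ‖·‖) be a separable Hilbert space and let A ∈ 𝓗(H) be a Hilbert–Schmidt operator with canonical (SVD) expansion A = Σ_{i=1}^∞ σ_i(A) ⟨·, u_i⟩ v_i, where {u_i}, {v_i} are orthonormal. Fix n ∈ ℕ₊. Then for every orthonormal set {ũ_1, …, ũ_n} ⊂ H one has Σ_{i=1}^n ‖A ũ_i‖² ≤ Σ_{i=1}^n σ_i(A)². Moreover, if σ_n(A) > σ_{n+1}(A), then equality holds if and only if span{ũ_1, …, ũ_n} = span{u_1, …, u_n}. -/

import Mathlib

/-! Applying the expansion `A = Σ σ_{j+1} ⟪u_j, ·⟫ v_j` to `x` and using orthonormality of `v` gives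
`‖A x‖² = Σ_j σ_{j+1}² ⟪u_j, x⟫²`, hence `Σ_i ‖A w_i‖² = Σ_j σ_{j+1}² t_j` with weights
`t_j = Σ_i ⟪w_i, u_j⟫² ∈ [0, 1]` of total mass at most `n` (Bessel). Against a nonincreasing
sequence such weights do best by putting mass `1` on the first `n` terms. If `σ_{n+1} < σ_n`,
equality forces `t_j = 1`, i.e. `u_j ∈ span {w_i}`, for every `j < n`, and two `n`-dimensional
spaces, one inside the other, coincide. -/

open scoped InnerProductSpace RealInnerProductSpace ENNReal
open Filter Topology

/-- The `n`-th singular value of an operator `A`, following Allahverdiev's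
characterization: `σ_n(A) := inf {‖A - L‖ : L compact, rank L ≤ n - 1}`. -/
noncomputable def sval {H : Type*} [NormedAddCommGroup H] [InnerProductSpace ℝ H]
    (A : H →L[ℝ] H) (n : ℕ) : ℝ :=
  sInf {r : ℝ | ∃ L : H →L[ℝ] H, IsCompactOperator L ∧
    Module.rank ℝ (LinearMap.range (L : H →ₗ[ℝ] H)) ≤ ((n - 1 : ℕ) : Cardinal) ∧ r = ‖A - L‖}

/-- The rank-one operator `x ↦ ⟪u, x⟫ • v`. -/
noncomputable def rankOne {H : Type*} [NormedAddCommGroup H] [InnerProductSpace ℝ H]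
    (u v : H) : H →L[ℝ] H := (innerSL ℝ u).smulRight v

/-- The squared Hilbert–Schmidt norm `‖A‖_HS² = Σ_{i=1}^∞ σ_i(A)²`, valued in `ℝ≥0∞`. -/
noncomputable def hsNormSq {H : Type*} [NormedAddCommGroup H] [InnerProductSpace ℝ H]
    (A : H →L[ℝ] H) : ℝ≥0∞ := ∑' i : ℕ, ENNReal.ofReal (sval A (i + 1) ^ 2)

section Majorization

open Finset

variable {a t : ℕ → ℝ} {n : ℕ}

theorem tsum_mul_le_sum_range_sub (hanti : Antitone a) (ha : 0 ≤ a n) (ht0 : ∀ j, 0 ≤ t j)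
    (ht : Summable t) (hat : Summable fun j => a j * t j) (htn : ∑' j, t j ≤ n) :
    ∑' j, a j * t j ≤ ∑ j ∈ range n, a j - ∑ j ∈ range n, (a j - a n) * (1 - t j) := by
  have htail : ∑' k, a (k + n) * t (k + n) ≤ a n * ∑' k, t (k + n) := by
    rw [← tsum_mul_left]
    exact ((summable_nat_add_iff n).2 hat).tsum_le_tsum
      (fun k => mul_le_mul_of_nonneg_right (hanti (Nat.le_add_left n k)) (ht0 _))
      (((summable_nat_add_iff n).2 ht).mul_left _)
  have htail_t : a n * ∑' k, t (k + n) ≤ a n * (n - ∑ j ∈ range n, t j) :=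
    mul_le_mul_of_nonneg_left (by linarith [ht.sum_add_tsum_nat_add n]) ha
  have hexpand : ∑ j ∈ range n, (a j - a n) * (1 - t j) =
      ∑ j ∈ range n, a j - ∑ j ∈ range n, a j * t j - a n * (n - ∑ j ∈ range n, t j) := by
    simp only [mul_sub, mul_one, sub_mul, sum_sub_distrib, ← mul_sum, sum_const, card_range,
      nsmul_eq_mul]
    ring
  linarith [hat.sum_add_tsum_nat_add n]

theorem sub_mul_one_sub_nonneg_of_mem_range (hanti : Antitone a) (ht1 : ∀ j, t j ≤ 1) :
    ∀ j ∈ range n, 0 ≤ (a j - a n) * (1 - t j) := fun j hj =>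
  mul_nonneg (sub_nonneg.2 (hanti (mem_range.1 hj).le)) (sub_nonneg.2 (ht1 j))

theorem tsum_mul_le_sum_range (hanti : Antitone a) (ha : 0 ≤ a n) (ht0 : ∀ j, 0 ≤ t j)
    (ht1 : ∀ j, t j ≤ 1) (ht : Summable t) (hat : Summable fun j => a j * t j)
    (htn : ∑' j, t j ≤ n) :
    ∑' j, a j * t j ≤ ∑ j ∈ range n, a j := by
  have := tsum_mul_le_sum_range_sub hanti ha ht0 ht hat htn
  linarith [sum_nonneg (sub_mul_one_sub_nonneg_of_mem_range hanti ht1 (n := n))]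

theorem tsum_mul_eq_sum_range_iff (hanti : Antitone a) (ha0 : ∀ j, 0 ≤ a j) (ht0 : ∀ j, 0 ≤ t j)
    (ht1 : ∀ j, t j ≤ 1) (ht : Summable t) (hat : Summable fun j => a j * t j)
    (htn : ∑' j, t j ≤ n) (hgap : ∀ j < n, a n < a j) :
    ∑' j, a j * t j = ∑ j ∈ range n, a j ↔ ∀ j < n, t j = 1 := by
  have hnn := sub_mul_one_sub_nonneg_of_mem_range hanti ht1 (n := n)
  constructor
  · intro heq j hj
    have hle := tsum_mul_le_sum_range_sub hanti (ha0 n) ht0 ht hat htn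
    have hzero := (sum_eq_zero_iff_of_nonneg hnn).1
      (le_antisymm (by linarith) (sum_nonneg hnn)) j (mem_range.2 hj)
    rcases mul_eq_zero.1 hzero with h | h
    · linarith [hgap j hj]
    · linarith
  · intro hone
    refine le_antisymm (tsum_mul_le_sum_range hanti (ha0 n) ht0 ht1 ht hat htn) ?_
    calc ∑ j ∈ range n, a j = ∑ j ∈ range n, a j * t j :=
          sum_congr rfl fun j hj => by rw [hone j (mem_range.1 hj), mul_one]
      _ ≤ ∑' j, a j * t j := hat.sum_le_tsum _ fun j _ => mul_nonneg (ha0 j) (ht0 j)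

end Majorization

theorem Submodule.span_range_eq_span_image_Iio {K M : Type*} [DivisionRing K] [AddCommGroup M]
    [Module K M] {n : ℕ} {w : Fin n → M} {u : ℕ → M} (hw : LinearIndependent K w)
    (hu : LinearIndependent K u) (hle : span K (u '' Set.Iio n) ≤ span K (Set.range w)) :
    span K (Set.range w) = span K (u '' Set.Iio n) := by
  have hu' : LinearIndependent K fun i : Fin n => u i := hu.comp _ Fin.val_injective
  have himage : u '' Set.Iio n = Set.range fun i : Fin n => u i := by
    ext y
    constructor
    · rintro ⟨k, hk, rfl⟩
      exact ⟨⟨k, hk⟩, rfl⟩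
    · rintro ⟨i, rfl⟩
      exact ⟨i, i.2, rfl⟩
  have : FiniteDimensional K (span K (Set.range w)) :=
    FiniteDimensional.span_of_finite K (Set.finite_range w)
  refine (eq_of_le_of_finrank_le hle ?_).symm
  rw [himage, finrank_span_eq_card hw, finrank_span_eq_card hu']

section Hilbert

variable {H : Type*} [NormedAddCommGroup H] [InnerProductSpace ℝ H]

theorem sval_nonneg (A : H →L[ℝ] H) (m : ℕ) : 0 ≤ sval A m :=
  Real.sInf_nonneg (by rintro r ⟨L, -, -, rfl⟩; exact norm_nonneg _)

theorem sval_antitone (A : H →L[ℝ] H) : Antitone (sval A) := by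
  intro m k hmk
  apply csInf_le_csInf
  · exact ⟨0, by rintro r ⟨L, -, -, rfl⟩; exact norm_nonneg _⟩
  · exact ⟨‖A‖, 0, isCompactOperator_zero, by simp, by simp⟩
  · rintro r ⟨L, hL, hrank, rfl⟩
    exact ⟨L, hL, hrank.trans (by exact_mod_cast Nat.sub_le_sub_right hmk 1), rfl⟩

theorem hasSum_sq_mul_inner_sq_of_tendsto {A : H →L[ℝ] H} {s : ℕ → ℝ} {u v : ℕ → H}
    (hv : Orthonormal ℝ v)
    (hA : Tendsto (fun m => ∑ i ∈ Finset.range m, s i • rankOne (u i) (v i)) atTop (𝓝 A))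
    (x : H) : HasSum (fun j => s j ^ 2 * ⟪u j, x⟫ ^ 2) (‖A x‖ ^ 2) := by
  have hpartial (m : ℕ) : ‖(∑ i ∈ Finset.range m, s i • rankOne (u i) (v i)) x‖ ^ 2 =
      ∑ i ∈ Finset.range m, s i ^ 2 * ⟪u i, x⟫ ^ 2 := by
    have hpartial_apply : (∑ i ∈ Finset.range m, s i • rankOne (u i) (v i)) x =
        ∑ i ∈ Finset.range m, (s i * ⟪u i, x⟫) • v i := by
      simp [rankOne, smul_smul]
    rw [hpartial_apply, ← real_inner_self_eq_norm_sq, hv.inner_sum]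
    simp only [conj_trivial]
    ring_nf
  have happly : Tendsto (fun m => (∑ i ∈ Finset.range m, s i • rankOne (u i) (v i)) x) atTop
      (𝓝 (A x)) := ((ContinuousLinearMap.apply ℝ H x).continuous.tendsto A).comp hA
  rw [hasSum_iff_tendsto_nat_of_nonneg (fun j => by positivity)]
  simpa only [hpartial] using happly.norm.pow 2

theorem hasSum_sq_mul_sum_inner_sq_of_tendsto {ι : Type*} [Fintype ι] {A : H →L[ℝ] H}
    {s : ℕ → ℝ} {u v : ℕ → H} (hv : Orthonormal ℝ v)
    (hA : Tendsto (fun m => ∑ i ∈ Finset.range m, s i • rankOne (u i) (v i)) atTop (𝓝 A))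
    (w : ι → H) :
    HasSum (fun j => s j ^ 2 * ∑ i, ⟪w i, u j⟫ ^ 2) (∑ i, ‖A (w i)‖ ^ 2) := by
  simp_rw [Finset.mul_sum, real_inner_comm (u _)]
  exact hasSum_sum fun i _ => hasSum_sq_mul_inner_sq_of_tendsto hv hA (w i)

theorem Orthonormal.sum_inner_sq_le_one {ι : Type*} [Fintype ι] {w : ι → H}
    (hw : Orthonormal ℝ w) {x : H} (hx : ‖x‖ = 1) : ∑ i, ⟪w i, x⟫ ^ 2 ≤ 1 := by
  simpa only [Real.norm_eq_abs, sq_abs, hx, one_pow] using hw.sum_inner_products_le x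

theorem Orthonormal.summable_inner_sq {ι : Type*} {u : ι → H} (hu : Orthonormal ℝ u) (x : H) :
    Summable fun j => ⟪u j, x⟫ ^ 2 := by
  simpa only [Real.norm_eq_abs, sq_abs] using hu.inner_products_summable x

theorem Orthonormal.tsum_inner_sq_le {ι : Type*} {u : ι → H} (hu : Orthonormal ℝ u) (x : H) :
    ∑' j, ⟪u j, x⟫ ^ 2 ≤ ‖x‖ ^ 2 := by
  simpa only [Real.norm_eq_abs, sq_abs] using hu.tsum_inner_products_le x

theorem Orthonormal.norm_sub_sum_inner_smul_sq {ι : Type*} [Fintype ι] {w : ι → H}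
    (hw : Orthonormal ℝ w) (x : H) :
    ‖x - ∑ i, ⟪w i, x⟫ • w i‖ ^ 2 = ‖x‖ ^ 2 - ∑ i, ⟪w i, x⟫ ^ 2 := by
  have hcross : ⟪x, ∑ i, ⟪w i, x⟫ • w i⟫ = ∑ i, ⟪w i, x⟫ ^ 2 := by
    simp only [inner_sum, real_inner_smul_right, real_inner_comm x, sq]
  have hproj : ‖∑ i, ⟪w i, x⟫ • w i‖ ^ 2 = ∑ i, ⟪w i, x⟫ ^ 2 := by
    rw [← real_inner_self_eq_norm_sq, hw.inner_sum]
    simp only [conj_trivial, sq]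
  rw [norm_sub_sq_real, hcross, hproj]
  ring

theorem Orthonormal.sum_inner_sq_eq_iff_mem_span {ι : Type*} [Fintype ι] {w : ι → H}
    (hw : Orthonormal ℝ w) (x : H) :
    ∑ i, ⟪w i, x⟫ ^ 2 = ‖x‖ ^ 2 ↔ x ∈ Submodule.span ℝ (Set.range w) := by
  have hresidual : ∑ i, ⟪w i, x⟫ ^ 2 = ‖x‖ ^ 2 ↔ x - ∑ i, ⟪w i, x⟫ • w i = 0 := by
    rw [← norm_eq_zero, ← pow_eq_zero_iff two_ne_zero, hw.norm_sub_sum_inner_smul_sq, sub_eq_zero,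
      eq_comm]
  rw [hresidual, sub_eq_zero]
  constructor
  · intro hx
    rw [hx]
    exact Submodule.sum_mem _ fun i _ => Submodule.smul_mem _ _ (Submodule.subset_span ⟨i, rfl⟩)
  · intro hx
    obtain ⟨c, rfl⟩ := (Submodule.mem_span_range_iff_exists_fun ℝ).1 hx
    simp only [hw.inner_right_fintype]

end Hilbert

section KyFan

open Finset

variable {H : Type*} [NormedAddCommGroup H] [InnerProductSpace ℝ H]

theorem Orthonormal.summable_sum_inner_sq {ι : Type*} [Fintype ι] {u : ℕ → H}
    (hu : Orthonormal ℝ u) (w : ι → H) : Summable fun j => ∑ i, ⟪w i, u j⟫ ^ 2 := by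
  simp_rw [real_inner_comm (u _)]
  exact summable_sum fun i _ => hu.summable_inner_sq (w i)

theorem Orthonormal.tsum_sum_inner_sq_le_card {ι : Type*} [Fintype ι] {u : ℕ → H} {w : ι → H}
    (hu : Orthonormal ℝ u) (hw : Orthonormal ℝ w) :
    ∑' j, ∑ i, ⟪w i, u j⟫ ^ 2 ≤ Fintype.card ι := by
  simp_rw [real_inner_comm (u _)]
  rw [Summable.tsum_finsetSum fun i _ => hu.summable_inner_sq (w i)]
  calc ∑ i, ∑' j, ⟪u j, w i⟫ ^ 2 ≤ ∑ i : ι, ‖w i‖ ^ 2 :=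
        sum_le_sum fun i _ => hu.tsum_inner_sq_le (w i)
    _ = Fintype.card ι := by simp [hw.norm_eq_one]

theorem Orthonormal.span_range_eq_span_image_Iio_iff {n : ℕ} {w : Fin n → H} {u : ℕ → H}
    (hw : Orthonormal ℝ w) (hu : Orthonormal ℝ u) :
    Submodule.span ℝ (Set.range w) = Submodule.span ℝ (u '' Set.Iio n) ↔
      ∀ j < n, ∑ i, ⟪w i, u j⟫ ^ 2 = 1 := by
  calc _ ↔ Submodule.span ℝ (u '' Set.Iio n) ≤ Submodule.span ℝ (Set.range w) :=
        ⟨fun h => h.ge, Submodule.span_range_eq_span_image_Iio hw.linearIndependent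
          hu.linearIndependent⟩
    _ ↔ ∀ j < n, u j ∈ Submodule.span ℝ (Set.range w) := by
        rw [Submodule.span_le, Set.image_subset_iff]
        rfl
    _ ↔ _ := forall₂_congr fun j _ => by
        rw [← hw.sum_inner_sq_eq_iff_mem_span, hu.norm_eq_one, one_pow]

variable {a : ℕ → ℝ} {n : ℕ} {u : ℕ → H} {w : Fin n → H}

theorem tsum_mul_sum_inner_sq_le (hanti : Antitone a) (ha : 0 ≤ a n) (hu : Orthonormal ℝ u)
    (hw : Orthonormal ℝ w) (hsum : Summable fun j => a j * ∑ i, ⟪w i, u j⟫ ^ 2) :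
    ∑' j, a j * ∑ i, ⟪w i, u j⟫ ^ 2 ≤ ∑ j ∈ range n, a j :=
  tsum_mul_le_sum_range hanti ha (fun j => by positivity)
    (fun j => hw.sum_inner_sq_le_one (hu.norm_eq_one j))
    (hu.summable_sum_inner_sq w) hsum (by simpa using hu.tsum_sum_inner_sq_le_card hw)

theorem tsum_mul_sum_inner_sq_eq_iff (hanti : Antitone a) (ha0 : ∀ j, 0 ≤ a j)
    (hgap : ∀ j < n, a n < a j) (hu : Orthonormal ℝ u) (hw : Orthonormal ℝ w)
    (hsum : Summable fun j => a j * ∑ i, ⟪w i, u j⟫ ^ 2) :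
    ∑' j, a j * ∑ i, ⟪w i, u j⟫ ^ 2 = ∑ j ∈ range n, a j ↔
      Submodule.span ℝ (Set.range w) = Submodule.span ℝ (u '' Set.Iio n) := by
  rw [hw.span_range_eq_span_image_Iio_iff hu]
  exact tsum_mul_eq_sum_range_iff hanti ha0 (fun j => by positivity)
    (fun j => hw.sum_inner_sq_le_one (hu.norm_eq_one j))
    (hu.summable_sum_inner_sq w) hsum (by simpa using hu.tsum_sum_inner_sq_le_card hw) hgap

end KyFan

theorem sum_norm_sq_le_sum_sval_sq_general
    {H : Type*} [NormedAddCommGroup H] [InnerProductSpace ℝ H]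
    (A : H →L[ℝ] H)
    (u v : ℕ → H) (hu : Orthonormal ℝ u) (hv : Orthonormal ℝ v)
    (hexp : Tendsto (fun m : ℕ => ∑ i ∈ Finset.range m, sval A (i + 1) • rankOne (u i) (v i))
      atTop (𝓝 A))
    (n : ℕ) :
    (∀ w : Fin n → H, Orthonormal ℝ w →
      (∑ i : Fin n, ‖A (w i)‖ ^ 2) ≤ ∑ i ∈ Finset.range n, sval A (i + 1) ^ 2) ∧
    (sval A (n + 1) < sval A n →
      ∀ w : Fin n → H, Orthonormal ℝ w →
        ((∑ i : Fin n, ‖A (w i)‖ ^ 2) = (∑ i ∈ Finset.range n, sval A (i + 1) ^ 2) ↔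
          Submodule.span ℝ (Set.range w) = Submodule.span ℝ (u '' Set.Iio n))) := by
  have hsq_le {i j : ℕ} (hij : i ≤ j) : sval A j ^ 2 ≤ sval A i ^ 2 :=
    pow_le_pow_left₀ (sval_nonneg A j) (sval_antitone A hij) 2
  have hanti : Antitone fun j => sval A (j + 1) ^ 2 := fun i j hij => hsq_le (by omega)
  have hsum (w : Fin n → H) :
      HasSum (fun j => sval A (j + 1) ^ 2 * ∑ i, ⟪w i, u j⟫ ^ 2) (∑ i, ‖A (w i)‖ ^ 2) :=
    hasSum_sq_mul_sum_inner_sq_of_tendsto hv hexp w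
  refine ⟨fun w hw => ?_, fun hgap w hw => ?_⟩
  · rw [← (hsum w).tsum_eq]
    exact tsum_mul_sum_inner_sq_le hanti (sq_nonneg _) hu hw (hsum w).summable
  · have hgap_sq : ∀ j < n, sval A (n + 1) ^ 2 < sval A (j + 1) ^ 2 := fun j hj =>
      (pow_lt_pow_left₀ hgap (sval_nonneg A _) two_ne_zero).trans_le (hsq_le hj)
    rw [← (hsum w).tsum_eq]
    exact tsum_mul_sum_inner_sq_eq_iff hanti (fun _ => sq_nonneg _) hgap_sq hu hw (hsum w).summable

/-- Let `A` be a Hilbert–Schmidt operator on a separable Hilbert space with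
canonical (SVD) expansion `A = Σ_{i=1}^∞ σ_i(A) ⟨·, u_i⟩ v_i` and fix `n ≥ 1`. Then for every
orthonormal family `w_1, …, w_n` one has `Σ_{i=1}^n ‖A w_i‖² ≤ Σ_{i=1}^n σ_i(A)²`; moreover,
if `σ_n(A) > σ_{n+1}(A)`, equality holds iff `span {w_1, …, w_n} = span {u_1, …, u_n}`. -/
theorem sum_norm_sq_le_sum_sval_sq
    {H : Type*} [NormedAddCommGroup H] [InnerProductSpace ℝ H]
    [CompleteSpace H] [TopologicalSpace.SeparableSpace H]
    (A : H →L[ℝ] H) (hA : IsCompactOperator A) (hAhs : hsNormSq A ≠ ⊤)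
    (u v : ℕ → H) (hu : Orthonormal ℝ u) (hv : Orthonormal ℝ v)
    (hexp : Tendsto (fun m : ℕ => ∑ i ∈ Finset.range m, sval A (i + 1) • rankOne (u i) (v i))
      atTop (𝓝 A))
    (n : ℕ) (hn : 0 < n) :
    (∀ w : Fin n → H, Orthonormal ℝ w →
      (∑ i : Fin n, ‖A (w i)‖ ^ 2) ≤ ∑ i ∈ Finset.range n, sval A (i + 1) ^ 2) ∧
    (sval A (n + 1) < sval A n →
      ∀ w : Fin n → H, Orthonormal ℝ w →
        ((∑ i : Fin n, ‖A (w i)‖ ^ 2) = (∑ i ∈ Finset.range n, sval A (i + 1) ^ 2) ↔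
          Submodule.span ℝ (Set.range w) = Submodule.span ℝ (u '' Set.Iio n))) :=
  sum_norm_sq_le_sum_sval_sq_general A u v hu hv hexp n
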